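/- arXiv:2403.05054 — 2 statements merged into one kernel-verified Lean document; each statement's English description precedes it below -/
import Mathlib

section
/- Let p, q be probability vectors on [n] with q having positive entries. Then ‖p - q‖₁² ≤ 2 KL(p ‖ q). -/
/-!
Each term of the divergence dominates a weighted square: for `p ≥ 0`, `q > 0`,
`p log (p / q) - p + q ≥ 3 (p - q)² / (2 (p + 2q))`, which comes from the `[2/1]` Padé bound
`log y ≤ (y - 1)(y + 5) / (2 (2y + 1))` at `y = q / p`. The corrections `-p + q` sum to zero,
and Cauchy–Schwarz against the weights `2 (p + 2q) / 3`, whose total is `2`, gives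
`(∑ |p - q|)² ≤ 2 ∑ 3 (p - q)² / (2 (p + 2q)) ≤ 2 KL(p ‖ q)`.
-/

open Real Finset

namespace Real

lemma hasDerivAt_pade_sub_log {y : ℝ} (hy : 0 < y) :
    HasDerivAt (fun x ↦ (x - 1) * (x + 5) / (2 * (2 * x + 1)) - log x)
      ((y - 1) ^ 3 / (y * (2 * y + 1) ^ 2)) y := by
  have hden : 2 * (2 * y + 1) ≠ 0 := by positivity
  have hnum : HasDerivAt (fun x ↦ (x - 1) * (x + 5)) (1 * (y + 5) + (y - 1) * 1) y :=
    ((hasDerivAt_id y).sub_const 1).mul ((hasDerivAt_id y).add_const 5)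
  have hden' : HasDerivAt (fun x ↦ 2 * (2 * x + 1)) (2 * (2 * 1)) y :=
    (((hasDerivAt_id y).const_mul 2).add_const 1).const_mul 2
  refine ((hnum.div hden' hden).sub (hasDerivAt_log hy.ne')).congr_deriv ?_
  field_simp
  ring

-- The gap to `log` has derivative of the sign of `(y - 1)³`, so it is minimal, and zero, at `y = 1`.
lemma log_le_pade {y : ℝ} (hy : 0 < y) : log y ≤ (y - 1) * (y + 5) / (2 * (2 * y + 1)) := by
  set gap : ℝ → ℝ := fun x ↦ (x - 1) * (x + 5) / (2 * (2 * x + 1)) - log x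
  have hderiv : ∀ x ∈ Set.Ioi (0 : ℝ), HasDerivAt gap ((x - 1) ^ 3 / (x * (2 * x + 1) ^ 2)) x :=
    fun x hx ↦ hasDerivAt_pade_sub_log hx
  have hcont : ContinuousOn gap (Set.Ioi 0) :=
    fun x hx ↦ (hderiv x hx).continuousAt.continuousWithinAt
  suffices gap 1 ≤ gap y by simpa [gap] using this
  rcases le_total 1 y with h1y | hy1
  · refine monotoneOn_of_hasDerivWithinAt_nonneg (convex_Ici 1)
      (hcont.mono fun x hx ↦ zero_lt_one.trans_le (Set.mem_Ici.mp hx))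
      (fun x hx ↦ (hderiv x (by simp_all; linarith)).hasDerivWithinAt) (fun x hx ↦ ?_)
      Set.self_mem_Ici h1y h1y
    rw [interior_Ici, Set.mem_Ioi] at hx
    have : 0 ≤ x - 1 := by linarith
    positivity
  · refine antitoneOn_of_hasDerivWithinAt_nonpos (convex_Ioc 0 1)
      (hcont.mono Set.Ioc_subset_Ioi_self)
      (fun x hx ↦ (hderiv x (by simp_all)).hasDerivWithinAt) (fun x hx ↦ ?_)
      ⟨hy, hy1⟩ ⟨one_pos, le_rfl⟩ hy1
    rw [interior_Ioc] at hx
    have hx0 : 0 < x := hx.1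
    exact div_nonpos_of_nonpos_of_nonneg (Odd.pow_nonpos (by decide) (by linarith [hx.2]))
      (by positivity)

lemma three_mul_sq_div_le_mul_log_div {p q : ℝ} (hp : 0 ≤ p) (hq : 0 < q) :
    3 * (p - q) ^ 2 / (2 * (p + 2 * q)) ≤ p * log (p / q) - p + q := by
  rcases hp.eq_or_lt with rfl | hp
  · have : 3 * (0 - q) ^ 2 / (2 * (0 + 2 * q)) = 3 / 4 * q := by field_simp; ring
    simp only [this, zero_div, log_zero, mul_zero]
    linarith
  have hpade : 3 * (p - q) ^ 2 / (2 * (p + 2 * q))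
      = q - p - p * ((q / p - 1) * (q / p + 5) / (2 * (2 * (q / p) + 1))) := by
    field_simp
    ring
  calc 3 * (p - q) ^ 2 / (2 * (p + 2 * q))
      ≤ q - p - p * log (q / p) := by
        rw [hpade]
        gcongr
        exact log_le_pade (div_pos hq hp)
    _ = p * log (p / q) - p + q := by rw [← inv_div, log_inv]; ring

end Real

/-- Pinsker's inequality: for probability vectors `p, q` on `[n]` with `q` positive,
`‖p - q‖₁² ≤ 2 KL(p ‖ q)` (with the convention `0 log 0 = 0`). -/
theorem stmt_10 (n : ℕ) (p q : Fin n → ℝ)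
    (hp : ∀ i, 0 ≤ p i) (hp1 : ∑ i, p i = 1)
    (hq : ∀ i, 0 < q i) (hq1 : ∑ i, q i = 1) :
    (∑ i, |p i - q i|) ^ 2 ≤ 2 * ∑ i, p i * Real.log (p i / q i) := by
  have hw : ∀ i, 0 < p i + 2 * q i := fun i ↦ by linarith [hp i, hq i]
  have hweights : ∑ i, 2 * (p i + 2 * q i) / 3 = 2 := by
    rw [← sum_div, ← mul_sum, sum_add_distrib, ← mul_sum, hp1, hq1]
    norm_num
  have hcorrection : ∑ i, (p i * log (p i / q i) - p i + q i) = ∑ i, p i * log (p i / q i) := by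
    rw [sum_add_distrib, sum_sub_distrib, hp1, hq1]
    ring
  calc (∑ i, |p i - q i|) ^ 2
      ≤ (∑ i, 3 * (p i - q i) ^ 2 / (2 * (p i + 2 * q i))) * ∑ i, 2 * (p i + 2 * q i) / 3 := by
        refine sum_sq_le_sum_mul_sum_of_sq_le_mul _ (fun i _ ↦ ?_) (fun i _ ↦ ?_) (fun i _ ↦ ?_)
        · have := hw i; positivity
        · have := hw i; positivity
        · have := (hw i).ne'
          rw [sq_abs]
          apply le_of_eq
          set w := p i + 2 * q i
          field_simp
    _ ≤ (∑ i, (p i * log (p i / q i) - p i + q i)) * 2 := by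
        rw [hweights]
        gcongr with i
        exact three_mul_sq_div_le_mul_log_div (hp i) (hq i)
    _ = 2 * ∑ i, p i * log (p i / q i) := by rw [hcorrection, mul_comm]
end

section
/- Let Pᵢⱼ = exp(η(-Cᵢⱼ + ∑ₘ aₘ(Dₘ)ᵢⱼ + xᵢ + yⱼ) - 1) with ∑ᵢⱼ Pᵢⱼ = 1, and suppose M is another matrix of the same form with dual variables (x + μ𝟙, y, a + λ) also satisfying ∑ᵢⱼ Mᵢⱼ = 1 and D_l·M = 0 for all l = 1,…,L (with K = 0, so all constraints are equalities). Then M = argmin over {N : N in the n²-simplex, D_l·N = 0 ∀l} of the generalized KL divergence KL(N ‖ P) = ∑ᵢⱼ nᵢⱼ(log(nᵢⱼ/pᵢⱼ) - 1); i.e., the constraint-dual update step coincides with the Bregman (KL) projection of P onto the equality-constraint set intersected with the simplex. -/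
private lemma kl_pt {m t : ℝ} (hm : 0 < m) (hn : 0 ≤ t) :
    t - m ≤ t * Real.log (t / m) ∧ (t * Real.log (t / m) = t - m → t = m) := by
  rcases hn.eq_or_lt with h0 | h0
  · refine ⟨by simp [← h0]; linarith, ?_⟩
    intro h; rw [← h0] at h; simp at h; linarith
  · have hq : 0 < m / t := div_pos hm h0
    have hcan : t * (m / t) = m := mul_div_cancel₀ m h0.ne'
    have hlog : Real.log (t / m) = -(Real.log (m / t)) := by
      rw [Real.log_div h0.ne' hm.ne', Real.log_div hm.ne' h0.ne']; ring
    constructor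
    · have h1 := Real.log_le_sub_one_of_pos hq
      have h2 : t * Real.log (m / t) ≤ t * (m / t - 1) :=
        mul_le_mul_of_nonneg_left h1 hn
      rw [hlog]; nlinarith
    · intro heq; by_contra hne
      have hne1 : m / t ≠ 1 := by
        intro h; apply hne
        field_simp at h; linarith
      have h1 := Real.log_lt_sub_one_of_pos hq hne1
      have h2 : t * Real.log (m / t) < t * (m / t - 1) :=
        mul_lt_mul_of_pos_left h1 h0
      rw [hlog] at heq; nlinarith

/-- The constraint-dual update step coincides with the Bregman (KL) projection of `P`
onto the equality-constraint set intersected with the simplex: if `M` has the same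
exponential form as `P` with shifted dual variables `(x + μ𝟙, y, a + λ)`, is normalized,
and satisfies `D_l·M = 0` for all `l`, then `M` is the unique minimizer of
`KL(N ‖ P) = ∑ᵢⱼ nᵢⱼ (log (nᵢⱼ/pᵢⱼ) - 1)` over the feasible set. -/
theorem stmt_19 (n L : ℕ) (η : ℝ) (hη : 0 < η)
    (C : Matrix (Fin n) (Fin n) ℝ) (D : Fin L → Matrix (Fin n) (Fin n) ℝ)
    (x y : Fin n → ℝ) (a lam : Fin L → ℝ) (μ : ℝ)
    (P M : Matrix (Fin n) (Fin n) ℝ)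
    (hP : ∀ i j, P i j =
      Real.exp (η * (-C i j + (∑ l, a l * D l i j) + x i + y j) - 1))
    (hPsum : ∑ i, ∑ j, P i j = 1)
    (hM : ∀ i j, M i j =
      Real.exp (η * (-C i j + (∑ l, (a l + lam l) * D l i j) + (x i + μ) + y j) - 1))
    (hMsum : ∑ i, ∑ j, M i j = 1)
    (hMfeas : ∀ l, ∑ i, ∑ j, D l i j * M i j = 0) :
    ∀ N : Matrix (Fin n) (Fin n) ℝ, (∀ i j, 0 ≤ N i j) →
      (∑ i, ∑ j, N i j = 1) → (∀ l, ∑ i, ∑ j, D l i j * N i j = 0) →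
      (∑ i, ∑ j, M i j * (Real.log (M i j / P i j) - 1))
          ≤ ∑ i, ∑ j, N i j * (Real.log (N i j / P i j) - 1) ∧
      ((∑ i, ∑ j, N i j * (Real.log (N i j / P i j) - 1))
          = (∑ i, ∑ j, M i j * (Real.log (M i j / P i j) - 1)) → N = M) := by
  have hMpos : ∀ i j, 0 < M i j := fun i j => by rw [hM]; exact Real.exp_pos _
  have hPpos : ∀ i j, 0 < P i j := fun i j => by rw [hP]; exact Real.exp_pos _
  have hlogMP : ∀ i j, Real.log (M i j / P i j) = η * ((∑ l, lam l * D l i j) + μ) := by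
    intro i j
    rw [Real.log_div (hMpos i j).ne' (hPpos i j).ne', hM, hP, Real.log_exp, Real.log_exp]
    rw [Finset.sum_congr rfl (fun l _ => add_mul (a l) (lam l) (D l i j)),
      Finset.sum_add_distrib]
    ring
  -- the weighted sum of log(M/P) against any feasible N is η μ
  have key : ∀ N : Matrix (Fin n) (Fin n) ℝ, (∑ i, ∑ j, N i j = 1) →
      (∀ l, ∑ i, ∑ j, D l i j * N i j = 0) →
      ∑ i, ∑ j, N i j * Real.log (M i j / P i j) = η * μ := by
    intro N h1 h2
    have hpt : ∀ i j, N i j * Real.log (M i j / P i j)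
        = (∑ l, η * lam l * (D l i j * N i j)) + η * μ * N i j := by
      intro i j
      rw [hlogMP i j,
        show N i j * (η * ((∑ l, lam l * D l i j) + μ))
          = (∑ l, lam l * D l i j) * (N i j * η) + η * μ * N i j by ring,
        Finset.sum_mul]
      congr 1
      exact Finset.sum_congr rfl fun l _ => by ring
    calc ∑ i, ∑ j, N i j * Real.log (M i j / P i j)
        = ∑ i, ∑ j, ((∑ l, η * lam l * (D l i j * N i j)) + η * μ * N i j) := by
          exact Finset.sum_congr rfl fun i _ => Finset.sum_congr rfl fun j _ => hpt i j
      _ = (∑ i, ∑ j, ∑ l, η * lam l * (D l i j * N i j)) + ∑ i, ∑ j, η * μ * N i j := by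
          simp [Finset.sum_add_distrib]
      _ = (∑ l, ∑ i, ∑ j, η * lam l * (D l i j * N i j)) + η * μ * ∑ i, ∑ j, N i j := by
          congr 1
          · calc ∑ i, ∑ j, ∑ l, η * lam l * (D l i j * N i j)
                = ∑ i, ∑ l, ∑ j, η * lam l * (D l i j * N i j) :=
                  Finset.sum_congr rfl fun i _ => Finset.sum_comm
              _ = ∑ l, ∑ i, ∑ j, η * lam l * (D l i j * N i j) := Finset.sum_comm
          · simp [Finset.mul_sum]
      _ = (∑ l, η * lam l * (∑ i, ∑ j, D l i j * N i j)) + η * μ * 1 := by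
          rw [h1]
          congr 1
          exact Finset.sum_congr rfl fun l _ => by simp [Finset.mul_sum]
      _ = η * μ := by
          simp only [h2, mul_zero, Finset.sum_const_zero]; ring
  have fM : ∑ i, ∑ j, M i j * (Real.log (M i j / P i j) - 1) = η * μ - 1 := by
    have h := key M hMsum hMfeas
    calc ∑ i, ∑ j, M i j * (Real.log (M i j / P i j) - 1)
        = (∑ i, ∑ j, M i j * Real.log (M i j / P i j)) - ∑ i, ∑ j, M i j := by
          simp [mul_sub, Finset.sum_sub_distrib]
      _ = η * μ - 1 := by rw [h, hMsum]
  intro N hN0 hN1 hNfeas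
  have fN : ∑ i, ∑ j, N i j * (Real.log (N i j / P i j) - 1)
      = (∑ i, ∑ j, N i j * Real.log (N i j / M i j)) + η * μ - 1 := by
    have hpt : ∀ i j, N i j * (Real.log (N i j / P i j) - 1)
        = N i j * Real.log (N i j / M i j) + N i j * Real.log (M i j / P i j) - N i j := by
      intro i j
      rcases (hN0 i j).eq_or_lt with h0 | h0
      · simp [← h0]
      · rw [Real.log_div h0.ne' (hPpos i j).ne', Real.log_div h0.ne' (hMpos i j).ne',
          Real.log_div (hMpos i j).ne' (hPpos i j).ne']
        ring
    calc ∑ i, ∑ j, N i j * (Real.log (N i j / P i j) - 1)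
        = (∑ i, ∑ j, N i j * Real.log (N i j / M i j))
          + (∑ i, ∑ j, N i j * Real.log (M i j / P i j)) - ∑ i, ∑ j, N i j := by
          rw [show (∑ i, ∑ j, N i j * (Real.log (N i j / P i j) - 1))
            = ∑ i, ∑ j, (N i j * Real.log (N i j / M i j)
              + N i j * Real.log (M i j / P i j) - N i j) from
            Finset.sum_congr rfl fun i _ => Finset.sum_congr rfl fun j _ => hpt i j]
          simp [Finset.sum_add_distrib, Finset.sum_sub_distrib]
      _ = _ := by rw [key N hN1 hNfeas, hN1]
  -- termwise nonnegativity of N log(N/M) - (N - M)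
  have hterm : ∀ i j, N i j - M i j ≤ N i j * Real.log (N i j / M i j) :=
    fun i j => (kl_pt (hMpos i j) (hN0 i j)).1
  have hsumNM : ∑ i, ∑ j, (N i j - M i j) = 0 := by
    simp [Finset.sum_sub_distrib, hN1, hMsum]
  have hge : 0 ≤ ∑ i, ∑ j, N i j * Real.log (N i j / M i j) := by
    calc (0:ℝ) = ∑ i, ∑ j, (N i j - M i j) := hsumNM.symm
      _ ≤ _ := Finset.sum_le_sum fun i _ => Finset.sum_le_sum fun j _ => hterm i j
  constructor
  · rw [fM, fN]; linarith
  · intro heq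
    rw [fM, fN] at heq
    have hzero : ∑ i, ∑ j, (N i j * Real.log (N i j / M i j) - (N i j - M i j)) = 0 := by
      simp only [Finset.sum_sub_distrib]
      rw [hN1, hMsum]
      linarith
    have hnn : ∀ i ∈ Finset.univ, (0:ℝ) ≤
        ∑ j, (N i j * Real.log (N i j / M i j) - (N i j - M i j)) :=
      fun i _ => Finset.sum_nonneg fun j _ => by linarith [hterm i j]
    have hinner := (Finset.sum_eq_zero_iff_of_nonneg hnn).mp hzero
    funext i j
    have hnn2 : ∀ j ∈ Finset.univ, (0:ℝ) ≤
        N i j * Real.log (N i j / M i j) - (N i j - M i j) :=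
      fun j _ => by linarith [hterm i j]
    have := (Finset.sum_eq_zero_iff_of_nonneg hnn2).mp (hinner i (Finset.mem_univ i))
      j (Finset.mem_univ j)
    exact (kl_pt (hMpos i j) (hN0 i j)).2 (by linarith)
end
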